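/- Let α ∈ (0,1), δ ∈ (-1,1), and let f ∈ C¹(ℝ). Fix x ∈ ℝ and suppose ∫_ℝ |f(x+t) − f(x)| / |t|^{1+α} dt < ∞ and ∫_ℝ |f'(x+t)| / |t|^α dt < ∞. Then for every a > 0, (L^{α,δ} f)(x) = (d_α/α) ∫_0^∞ [(1+δ) f'(x+u) − (1−δ) f'(x−u)] / (2u^α) du = (a^{1−α}/α) ∫_ℝ u f'(x + au) ν_{α,δ}(du). -/

import Mathlib

open MeasureTheory Real Filter Set
open scoped Topology

noncomputable section

/-- Normalizing constant `d_α`. -/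
def dconst (α : ℝ) : ℝ :=
  if α = 1 then 2 / π else -1 / (Real.Gamma (-α) * Real.cos (π * α / 2))

/-- Density of the Lévy measure `ν_{α,δ}` with respect to Lebesgue measure. -/
def nuDens (α δ : ℝ) (u : ℝ) : ℝ :=
  dconst α * (if 0 < u then (1 + δ) / 2 * u ^ (-1 - α)
    else if u < 0 then (1 - δ) / 2 * |u| ^ (-1 - α) else 0)

/-- Generator `L^{α,δ}` for `α ∈ (0,1)`. -/
def Lop (α δ : ℝ) (f : ℝ → ℝ) (x : ℝ) : ℝ :=
  ∫ u, (f (x + u) - f x) * nuDens α δ u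

/-- Generator `L^{1,0}` (note `ν_{1,0}(du) = (2/π)|u|⁻²/2 du = 1/(π u²) du`). -/
def Lop1 (f : ℝ → ℝ) (x : ℝ) : ℝ :=
  ∫ u, (f (x + u) - f x - (if |u| ≤ 1 then u * deriv f x else 0)) * (1 / (π * u ^ 2))

/-- Combined generator. -/
def LopA (α δ : ℝ) (f : ℝ → ℝ) (x : ℝ) : ℝ :=
  if α = 1 then Lop1 f x else Lop α δ f x

/-- Characteristic function of the strictly `α`-stable law at time `t`. -/
def stableCF (α δ t l : ℝ) : ℂ :=
  if α = 1 then Complex.exp (↑(-(t * |l|)) : ℂ)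
  else Complex.exp ((↑(-(t * |l| ^ α)) : ℂ) *
    (1 - Complex.I * (δ : ℂ) * ((Real.sign l : ℝ) : ℂ) * ((Real.tan (π * α / 2) : ℝ) : ℂ)))

/-- `μ` is the strictly `α`-stable law `S_α(δ)`. -/
def IsStableLaw (α δ : ℝ) (μ : Measure ℝ) : Prop :=
  ∀ l : ℝ, (∫ x, Complex.exp (Complex.I * (l : ℂ) * (x : ℂ)) ∂μ) = stableCF α δ 1 l

/-- The class `H_β`. -/
def memHbeta (β : ℝ) (h : ℝ → ℝ) : Prop :=
  ∀ x y : ℝ, |h x - h y| ≤ min |x - y| (|x - y| ^ β)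

/-- The distance `d_{W_β}`. -/
def dWbeta (β : ℝ) (μ ν : Measure ℝ) : ℝ :=
  sSup { r | ∃ h : ℝ → ℝ, memHbeta β h ∧ r = |(∫ x, h x ∂μ) - ∫ x, h x ∂ν| }

/-- The Kolmogorov distance. -/
def dKol (μ ν : Measure ℝ) : ℝ :=
  sSup { r | ∃ x : ℝ, r = |(μ (Set.Iic x)).toReal - (ν (Set.Iic x)).toReal| }

/-- The solution of Stein's equation. -/
def steinSol (α : ℝ) (p h : ℝ → ℝ) (x : ℝ) : ℝ :=
  -∫ t in Set.Ioi (0:ℝ), ∫ y, p y *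
    (h ((1 - Real.exp (-t)) ^ (1/α) * y + Real.exp (-t/α) * x) - h y)

lemma integral_Ioi_rpow_alpha {α : ℝ} (hα : 0 < α) {s : ℝ} (hs : 0 < s) :
    ∫ u in Set.Ioi s, u ^ (-1 - α) = s ^ (-α) / α := by
  rw [integral_Ioi_rpow_of_lt (by linarith) hs, show (-1 - α) + 1 = -α by ring,
    neg_div_neg_eq]

lemma fubini_key {α : ℝ} (hα : 0 < α) (g : ℝ → ℝ) (hg : Continuous g)
    (hint : IntegrableOn (fun s => g s * s ^ (-α)) (Set.Ioi 0)) :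
    ∫ u in Set.Ioi (0:ℝ), (∫ s in (0:ℝ)..u, g s) * u ^ (-1 - α)
      = (∫ s in Set.Ioi (0:ℝ), g s * s ^ (-α)) / α := by
  set μ := volume.restrict (Set.Ioi (0:ℝ)) with hμ
  set F : ℝ → ℝ → ℝ := fun u s => if s ≤ u then g s * u ^ (-1 - α) else 0 with hF
  have hmeas : AEStronglyMeasurable (Function.uncurry F) (μ.prod μ) := by
    have heq : Function.uncurry F = Set.indicator {p : ℝ × ℝ | p.2 ≤ p.1}
        (fun p => g p.2 * p.1 ^ (-1 - α)) := by
      ext p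
      simp only [Function.uncurry, hF, Set.indicator_apply, Set.mem_setOf_eq]
    rw [heq]
    exact (((hg.measurable.comp measurable_snd).mul
      (measurable_fst.pow_const _)).indicator
      (measurableSet_le measurable_snd measurable_fst)).aestronglyMeasurable
  have hFs : ∀ s : ℝ, (fun u => F u s)
      = Set.indicator (Set.Ici s) (fun u => g s * u ^ (-1 - α)) := by
    intro s; ext u
    simp only [hF, Set.indicator_apply, Set.mem_Ici]
  have hIciSub : ∀ s : ℝ, 0 < s → Set.Ici s ⊆ Set.Ioi (0:ℝ) := by
    intro s hs u hu; exact lt_of_lt_of_le hs hu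
  have hIci : ∀ s : ℝ, 0 < s → IntegrableOn (fun u => g s * u ^ (-1 - α)) (Set.Ici s) := by
    intro s hs
    rw [integrableOn_Ici_iff_integrableOn_Ioi]
    exact (integrableOn_Ioi_rpow_of_lt (by linarith) hs).const_mul _
  have hInt_s : ∀ s : ℝ, 0 < s → Integrable (fun u => F u s) μ := by
    intro s hs
    rw [hFs s]
    exact ((integrable_indicator_iff measurableSet_Ici).2 (hIci s hs)).restrict
  have hnorm_val : ∀ s : ℝ, 0 < s →
      (∫ u, ‖F u s‖ ∂μ) = ‖g s‖ * (s ^ (-α) / α) := by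
    intro s hs
    have h1 : (fun u => ‖F u s‖)
        = Set.indicator (Set.Ici s) (fun u => ‖g s‖ * u ^ (-1 - α)) := by
      ext u
      by_cases h : s ≤ u
      · have hu : (0:ℝ) < u := lt_of_lt_of_le hs h
        simp [hF, h, Set.indicator_apply, Set.mem_Ici, abs_mul,
          abs_of_nonneg (Real.rpow_nonneg hu.le _)]
      · simp [hF, h, Set.indicator_apply, Set.mem_Ici]
    rw [h1, hμ, integral_indicator measurableSet_Ici,
      Measure.restrict_restrict measurableSet_Ici,
      Set.inter_eq_left.2 (hIciSub s hs), integral_const_mul,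
      integral_Ici_eq_integral_Ioi, integral_Ioi_rpow_alpha hα hs]
  have hprod : Integrable (Function.uncurry F) (μ.prod μ) := by
    rw [integrable_prod_iff' hmeas]
    constructor
    · filter_upwards [ae_restrict_mem measurableSet_Ioi] with s hs
      exact hInt_s s hs
    · have hmaj : Integrable (fun s => ‖g s‖ * (s ^ (-α) / α)) μ := by
        apply (hint.norm.div_const α).congr
        filter_upwards [ae_restrict_mem measurableSet_Ioi] with s hs
        rw [norm_mul, Real.norm_of_nonneg (Real.rpow_nonneg hs.le _), mul_div_assoc]
      apply hmaj.congr
      filter_upwards [ae_restrict_mem measurableSet_Ioi] with s hs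
      exact (hnorm_val s hs).symm
  have hswap := integral_integral_swap (f := F) hprod
  have hL : (∫ u, (∫ s, F u s ∂μ) ∂μ)
      = ∫ u in Set.Ioi (0:ℝ), (∫ s in (0:ℝ)..u, g s) * u ^ (-1 - α) := by
    apply setIntegral_congr_fun measurableSet_Ioi
    intro u hu
    have h2 : (fun s => F u s) = Set.indicator (Set.Iic u) (fun s => g s * u ^ (-1 - α)) := by
      ext s; simp only [hF, Set.indicator_apply, Set.mem_Iic]
    dsimp only
    rw [h2, hμ, integral_indicator measurableSet_Iic,
      Measure.restrict_restrict measurableSet_Iic,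
      show Set.Iic u ∩ Set.Ioi 0 = Set.Ioc 0 u by ext y; simp [Set.mem_Ioc, and_comm],
      integral_mul_const, ← intervalIntegral.integral_of_le (le_of_lt hu)]
  have hR : (∫ s, (∫ u, F u s ∂μ) ∂μ) = ∫ s in Set.Ioi (0:ℝ), g s * s ^ (-α) / α := by
    apply setIntegral_congr_fun measurableSet_Ioi
    intro s hs
    dsimp only
    rw [hFs s, hμ, integral_indicator measurableSet_Ici,
      Measure.restrict_restrict measurableSet_Ici,
      Set.inter_eq_left.2 (hIciSub s hs), integral_const_mul,
      integral_Ici_eq_integral_Ioi, integral_Ioi_rpow_alpha hα hs, mul_div_assoc]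
  rw [← hL, hswap, hR, integral_div]

lemma integral_split {h : ℝ → ℝ} (hpos : IntegrableOn h (Set.Ioi 0))
    (hneg : IntegrableOn h (Set.Iio 0)) :
    ∫ u, h u = (∫ u in Set.Ioi (0:ℝ), h u) + ∫ u in Set.Iio (0:ℝ), h u := by
  have hIic : IntegrableOn h (Set.Iic 0) := by
    rw [IntegrableOn, ← Measure.restrict_congr_set Iio_ae_eq_Iic]
    exact hneg
  have hint : Integrable h := by
    rw [← integrableOn_univ, ← Set.Iic_union_Ioi (a := (0:ℝ))]
    exact hIic.union hpos
  rw [← integral_add_compl measurableSet_Ioi hint, compl_Ioi,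
    integral_Iic_eq_integral_Iio, add_comm]

lemma integral_Iio_reflect (h : ℝ → ℝ) :
    ∫ u in Set.Iio (0:ℝ), h u = ∫ u in Set.Ioi (0:ℝ), h (-u) := by
  have h1 := integral_comp_neg_Ioi (0:ℝ) h
  rw [neg_zero, integral_Iic_eq_integral_Iio] at h1
  exact h1.symm

lemma integrableOn_Iio_of_reflect {h : ℝ → ℝ}
    (hi : IntegrableOn (fun u => h (-u)) (Set.Ioi 0)) :
    IntegrableOn h (Set.Iio 0) := by
  rw [← integrable_indicator_iff measurableSet_Iio]
  have h2 := ((integrable_indicator_iff measurableSet_Ioi).2 hi).comp_neg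
  apply h2.congr
  apply Filter.Eventually.of_forall
  intro y
  by_cases hy : y < 0
  · simp [Set.indicator_apply, hy, neg_pos.2 hy, neg_neg]
  · simp [Set.indicator_apply, hy, fun h' => hy (neg_pos.1 h')]

lemma scale_int {α a : ℝ} (ha : 0 < a) (g : ℝ → ℝ)
    (hint : IntegrableOn (fun s => g s * s ^ (-α)) (Set.Ioi 0)) :
    IntegrableOn (fun u => g (a * u) * u ^ (-α)) (Set.Ioi 0) ∧
    ∫ u in Set.Ioi (0:ℝ), g (a * u) * u ^ (-α)
      = a ^ α * a⁻¹ * ∫ s in Set.Ioi (0:ℝ), g s * s ^ (-α) := by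
  set H : ℝ → ℝ := fun s => g s * s ^ (-α) with hH
  have hcomp : IntegrableOn (fun u => H (a * u)) (Set.Ioi 0) := by
    rw [integrableOn_Ioi_comp_mul_left_iff H 0 ha, mul_zero]
    exact hint
  have heq : Set.EqOn (fun u => g (a * u) * u ^ (-α))
      (fun u => a ^ α * H (a * u)) (Set.Ioi 0) := by
    intro u hu
    have hu0 : (0:ℝ) < u := hu
    have haα : (0:ℝ) < a ^ α := Real.rpow_pos_of_pos ha α
    simp only [hH]
    rw [Real.mul_rpow ha.le hu0.le, Real.rpow_neg ha.le]
    field_simp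
  constructor
  · exact IntegrableOn.congr_fun (hcomp.const_mul _) heq.symm measurableSet_Ioi
  · rw [setIntegral_congr_fun measurableSet_Ioi heq, integral_const_mul,
      integral_comp_mul_left_Ioi H 0 ha, mul_zero, smul_eq_mul]
    ring

/-- Proposition 4.1 a): alternate expressions for `L^{α,δ} f(x)`, `α ∈ (0,1)`. -/
theorem Lop_alternate_expressions
    (α δ : ℝ) (hα0 : 0 < α) (hα1 : α < 1) (hδ : δ ∈ Set.Ioo (-1 : ℝ) 1)
    (f : ℝ → ℝ) (hf : ContDiff ℝ 1 f) (x : ℝ)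
    (hint1 : Integrable (fun t => (f (x + t) - f x) * |t| ^ (-1 - α)))
    (hint2 : Integrable (fun t => deriv f (x + t) * |t| ^ (-α))) :
    Lop α δ f x = dconst α / α *
        ∫ u in Set.Ioi (0:ℝ),
          ((1 + δ) * deriv f (x + u) - (1 - δ) * deriv f (x - u)) / (2 * u ^ α) ∧
    ∀ a : ℝ, 0 < a →
      Lop α δ f x = a ^ (1 - α) / α * ∫ u, u * deriv f (x + a * u) * nuDens α δ u := by
  
  set c := dconst α with hcdef
  have hf' : Continuous (deriv f) := hf.continuous_deriv le_rfl
  have hdiff : Differentiable ℝ f := hf.differentiable one_ne_zero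
  set gp : ℝ → ℝ := fun s => deriv f (x + s) with hgp
  set gm : ℝ → ℝ := fun s => -deriv f (x - s) with hgm
  have hgpc : Continuous gp := hf'.comp (continuous_const.add continuous_id)
  have hgmc : Continuous gm := (hf'.comp (continuous_const.sub continuous_id)).neg
  have hip : IntegrableOn (fun s => gp s * s ^ (-α)) (Set.Ioi 0) := by
    apply IntegrableOn.congr_fun hint2.integrableOn _ measurableSet_Ioi
    intro s hs
    have hs' : (0:ℝ) < s := hs
    simp only [hgp, abs_of_pos hs']
  have him0 : IntegrableOn (fun s => deriv f (x - s) * s ^ (-α)) (Set.Ioi 0) := by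
    apply IntegrableOn.congr_fun hint2.comp_neg.integrableOn _ measurableSet_Ioi
    intro s hs
    have hs' : (0:ℝ) < s := hs
    dsimp only
    rw [abs_neg, abs_of_pos hs', ← sub_eq_add_neg]
  have him : IntegrableOn (fun s => gm s * s ^ (-α)) (Set.Ioi 0) := by
    have h2 := him0.neg
    apply h2.congr
    apply Filter.Eventually.of_forall
    intro s
    simp [hgm, neg_mul]
  set A := ∫ s in Set.Ioi (0:ℝ), gp s * s ^ (-α) with hA
  set B := ∫ s in Set.Ioi (0:ℝ), gm s * s ^ (-α) with hB
  have hftc_p : ∀ u : ℝ, f (x + u) - f x = ∫ s in (0:ℝ)..u, gp s := by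
    intro u
    rw [show (∫ s in (0:ℝ)..u, gp s) = ∫ t in (x + 0)..(x + u), deriv f t from
        intervalIntegral.integral_comp_add_left _ x,
      add_zero,
      intervalIntegral.integral_deriv_eq_sub (fun t _ => hdiff.differentiableAt)
        (hf'.intervalIntegrable _ _)]
  have hftc_m : ∀ u : ℝ, f (x - u) - f x = ∫ s in (0:ℝ)..u, gm s := by
    intro u
    rw [show (∫ s in (0:ℝ)..u, gm s) = -∫ s in (0:ℝ)..u, deriv f (x - s) from
        intervalIntegral.integral_neg,
      show (∫ s in (0:ℝ)..u, deriv f (x - s)) = ∫ t in (x - u)..(x - 0), deriv f t from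
        intervalIntegral.integral_comp_sub_left _ x,
      sub_zero,
      intervalIntegral.integral_deriv_eq_sub (fun t _ => hdiff.differentiableAt)
        (hf'.intervalIntegrable _ _)]
    ring
  have hnup : ∀ u : ℝ, 0 < u → nuDens α δ u = c * ((1 + δ) / 2) * u ^ (-1 - α) := by
    intro u hu
    simp only [nuDens, if_pos hu, ← hcdef]
    ring
  have hnum : ∀ u : ℝ, 0 < u → nuDens α δ (-u) = c * ((1 - δ) / 2) * u ^ (-1 - α) := by
    intro u hu
    have h1 : ¬ (0 < -u) := by linarith
    have h2 : -u < 0 := by linarith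
    simp only [nuDens, if_neg h1, if_pos h2, abs_neg, abs_of_pos hu, ← hcdef]
    ring
  have hintp : IntegrableOn (fun u => (f (x + u) - f x) * nuDens α δ u) (Set.Ioi 0) := by
    apply IntegrableOn.congr_fun (hint1.integrableOn.const_mul (c * ((1 + δ) / 2)))
      _ measurableSet_Ioi
    intro u hu
    have hu' : (0:ℝ) < u := hu
    dsimp only
    rw [hnup u hu', abs_of_pos hu']
    ring
  have hintm : IntegrableOn (fun u => (f (x + u) - f x) * nuDens α δ u) (Set.Iio 0) := by
    apply integrableOn_Iio_of_reflect (h := fun u => (f (x + u) - f x) * nuDens α δ u)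
    apply IntegrableOn.congr_fun (hint1.comp_neg.integrableOn.const_mul (c * ((1 - δ) / 2)))
      _ measurableSet_Ioi
    intro u hu
    have hu' : (0:ℝ) < u := hu
    dsimp only
    rw [hnum u hu', abs_neg, abs_of_pos hu']
    ring
  have h1 : ∀ u ∈ Set.Ioi (0:ℝ), (f (x + u) - f x) * nuDens α δ u
      = c * ((1 + δ) / 2) * ((∫ s in (0:ℝ)..u, gp s) * u ^ (-1 - α)) := by
    intro u hu
    have hu' : (0:ℝ) < u := hu
    rw [hnup u hu', hftc_p u]
    ring
  have h2 : ∀ u ∈ Set.Ioi (0:ℝ), (f (x + -u) - f x) * nuDens α δ (-u)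
      = c * ((1 - δ) / 2) * ((∫ s in (0:ℝ)..u, gm s) * u ^ (-1 - α)) := by
    intro u hu
    have hu' : (0:ℝ) < u := hu
    rw [hnum u hu', ← sub_eq_add_neg, hftc_m u]
    ring
  have hIposval : (∫ u in Set.Ioi (0:ℝ), (f (x + u) - f x) * nuDens α δ u)
      = c * ((1 + δ) / 2) * (A / α) := by
    rw [setIntegral_congr_fun measurableSet_Ioi h1, integral_const_mul,
      fubini_key hα0 gp hgpc hip, hA]
  have hInegval : (∫ u in Set.Iio (0:ℝ), (f (x + u) - f x) * nuDens α δ u)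
      = c * ((1 - δ) / 2) * (B / α) := by
    have h0 : (∫ u in Set.Iio (0:ℝ), (f (x + u) - f x) * nuDens α δ u)
        = ∫ u in Set.Ioi (0:ℝ), (f (x + -u) - f x) * nuDens α δ (-u) :=
      integral_Iio_reflect fun v => (f (x + v) - f x) * nuDens α δ v
    rw [h0, setIntegral_congr_fun measurableSet_Ioi h2, integral_const_mul,
      fubini_key hα0 gm hgmc him, hB]
  have hLop : Lop α δ f x = c * ((1 + δ) / 2) * (A / α) + c * ((1 - δ) / 2) * (B / α) := by
    rw [Lop, integral_split hintp hintm, hIposval, hInegval]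
  constructor
  · have hRHS1 : (∫ u in Set.Ioi (0:ℝ),
        ((1 + δ) * deriv f (x + u) - (1 - δ) * deriv f (x - u)) / (2 * u ^ α))
        = (1 + δ) / 2 * A + (1 - δ) / 2 * B := by
      have h3 : ∀ u ∈ Set.Ioi (0:ℝ),
          ((1 + δ) * deriv f (x + u) - (1 - δ) * deriv f (x - u)) / (2 * u ^ α)
          = (1 + δ) / 2 * (gp u * u ^ (-α)) + (1 - δ) / 2 * (gm u * u ^ (-α)) := by
        intro u hu
        have hu' : (0:ℝ) < u := hu
        have h4 : (0:ℝ) < u ^ α := Real.rpow_pos_of_pos hu' α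
        rw [Real.rpow_neg hu'.le]
        simp only [hgp, hgm]
        field_simp
        ring
      rw [setIntegral_congr_fun measurableSet_Ioi h3,
        integral_add (hip.const_mul _) (him.const_mul _),
        integral_const_mul, integral_const_mul, hA, hB]
    rw [hLop, hRHS1]
    ring
  · intro a ha
    obtain ⟨hsp, hvp⟩ := scale_int ha gp hip
    obtain ⟨hsm, hvm⟩ := scale_int ha gm him
    have hpow : ∀ u : ℝ, 0 < u → u * u ^ (-1 - α) = u ^ (-α) := by
      intro u hu
      rw [show (-α) = 1 + (-1 - α) by ring, Real.rpow_add hu, Real.rpow_one]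
    have h5 : ∀ u ∈ Set.Ioi (0:ℝ), u * deriv f (x + a * u) * nuDens α δ u
        = c * ((1 + δ) / 2) * (gp (a * u) * u ^ (-α)) := by
      intro u hu
      have hu' : (0:ℝ) < u := hu
      rw [hnup u hu']
      simp only [hgp]
      rw [← hpow u hu']
      ring
    have h6 : ∀ u ∈ Set.Ioi (0:ℝ), (-u) * deriv f (x + a * -u) * nuDens α δ (-u)
        = c * ((1 - δ) / 2) * (gm (a * u) * u ^ (-α)) := by
      intro u hu
      have hu' : (0:ℝ) < u := hu
      rw [hnum u hu', mul_neg, ← sub_eq_add_neg]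
      simp only [hgm]
      rw [← hpow u hu']
      ring
    have hNp : IntegrableOn (fun u => u * deriv f (x + a * u) * nuDens α δ u) (Set.Ioi 0) :=
      IntegrableOn.congr_fun (hsp.const_mul (c * ((1 + δ) / 2)))
        (fun u hu => (h5 u hu).symm) measurableSet_Ioi
    have hNm : IntegrableOn (fun u => u * deriv f (x + a * u) * nuDens α δ u) (Set.Iio 0) := by
      apply integrableOn_Iio_of_reflect (h := fun u => u * deriv f (x + a * u) * nuDens α δ u)
      exact IntegrableOn.congr_fun (hsm.const_mul (c * ((1 - δ) / 2)))
        (fun u hu => (h6 u hu).symm) measurableSet_Ioi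
    have hv1 : (∫ u in Set.Ioi (0:ℝ), u * deriv f (x + a * u) * nuDens α δ u)
        = c * ((1 + δ) / 2) * (a ^ α * a⁻¹ * A) := by
      rw [setIntegral_congr_fun measurableSet_Ioi h5, integral_const_mul, hvp, hA]
    have hv2 : (∫ u in Set.Iio (0:ℝ), u * deriv f (x + a * u) * nuDens α δ u)
        = c * ((1 - δ) / 2) * (a ^ α * a⁻¹ * B) := by
      have h0 : (∫ u in Set.Iio (0:ℝ), u * deriv f (x + a * u) * nuDens α δ u)
          = ∫ u in Set.Ioi (0:ℝ), (-u) * deriv f (x + a * -u) * nuDens α δ (-u) :=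
        integral_Iio_reflect fun v => v * deriv f (x + a * v) * nuDens α δ v
      rw [h0, setIntegral_congr_fun measurableSet_Ioi h6, integral_const_mul, hvm, hB]
    have hkey : a ^ (1 - α) * (a ^ α * a⁻¹) = 1 := by
      rw [← mul_assoc, ← Real.rpow_add ha, show (1 - α) + α = 1 by ring, Real.rpow_one]
      exact mul_inv_cancel₀ (ne_of_gt ha)
    rw [integral_split hNp hNm, hv1, hv2, hLop]
    linear_combination (-(c * ((1 + δ) / 2) * A + c * ((1 - δ) / 2) * B) / α) * hkey
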